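/- arXiv:2407.05987 — 2 statements merged into one kernel-verified Lean document; each statement's English description precedes it below -/
import Mathlib

section
/- Let f : [a,b] → ℝ be monotone decreasing and g : [a,b] → ℝ be absolutely continuous (in Lean: g differentiable with integrable derivative satisfying the fundamental theorem of calculus). Suppose F : ℝ → ℝ is Lipschitz, f(a) ≤ g(a), f'(t) ≤ F(f(t)) for almost every t ∈ (a,b) (where f' denotes the a.e.-defined derivative of the monotone function f), and g'(t) = F(g(t)) for almost every t ∈ (a,b). Then f(t) ≤ g(t) for every t ∈ [a,b]. -/
/-!
Put `u = f - g` and suppose `u t > 0`. Let `c` be the last point of `[a, t]` with `u c ≤ 0`; it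
exists because `f` can only jump down while `g` is continuous. On `(c, t]` the Lipschitz bound gives
`f' - g' ≤ F f - F g ≤ K u` a.e., and since the integral of the a.e. derivative of a decreasing
function underestimates its decrease, `u s ≤ K ∫_c^s u` on `[c, t]`. Iterating this integral
inequality from a uniform bound `M` gives `u ≤ M (K (s - c))ⁿ / n!` for all `n`, so `u t ≤ 0`.
-/

open MeasureTheory Set Filter

section AntitoneDeriv

variable {f f' : ℝ → ℝ} {a b : ℝ}

lemma ae_restrict_Ioc_eq_deriv_of_hasDerivAt
    (hf' : ∀ᵐ x, x ∈ Ioo a b → HasDerivAt f (f' x) x) :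
    f' =ᵐ[volume.restrict (Ioc a b)] deriv f := by
  rw [← restrict_Ioo_eq_restrict_Ioc, EventuallyEq, ae_restrict_iff' measurableSet_Ioo]
  filter_upwards [hf'] with x hx hxmem using (hx hxmem).deriv.symm

lemma AntitoneOn.intervalIntegrable_of_hasDerivAt (hf : AntitoneOn f (Icc a b)) (hab : a ≤ b)
    (hf' : ∀ᵐ x, x ∈ Ioo a b → HasDerivAt f (f' x) x) :
    IntervalIntegrable f' volume a b := by
  have hmono : MonotoneOn (-f) (uIcc a b) := by rw [uIcc_of_le hab]; exact hf.neg
  refine hmono.intervalIntegrable_deriv.neg.congr_ae ?_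
  rw [uIoc_of_le hab]
  filter_upwards [ae_restrict_Ioc_eq_deriv_of_hasDerivAt hf'] with x hx
  simp only [deriv.neg', Pi.neg_apply, neg_neg, hx]

lemma AntitoneOn.sub_le_integral_of_hasDerivAt (hf : AntitoneOn f (Icc a b)) (hab : a ≤ b)
    (hf' : ∀ᵐ x, x ∈ Ioo a b → HasDerivAt f (f' x) x) :
    f b - f a ≤ ∫ x in a..b, f' x := by
  have hmono : MonotoneOn (-f) (uIcc a b) := by rw [uIcc_of_le hab]; exact hf.neg
  have hle : 0 ≤ (-f) b - (-f) a := sub_nonneg.2 (hmono (by simp) (by simp) hab)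
  have h := hmono.intervalIntegral_deriv_mem_uIcc
  rw [uIcc_of_le hle, deriv.neg', intervalIntegral.integral_neg] at h
  rw [intervalIntegral.integral_of_le hab,
    integral_congr_ae (ae_restrict_Ioc_eq_deriv_of_hasDerivAt hf'),
    ← intervalIntegral.integral_of_le hab]
  simp only [Pi.neg_apply] at h
  linarith [h.2]

end AntitoneDeriv

section Gronwall

variable {w : ℝ → ℝ} {c d K M : ℝ}

lemma integral_sub_pow (c t : ℝ) (n : ℕ) :
    ∫ x in c..t, (x - c) ^ n = (t - c) ^ (n + 1) / (n + 1) := by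
  simp [intervalIntegral.integral_comp_sub_right (· ^ n), integral_pow]

lemma le_mul_pow_div_factorial_of_le_mul_integral (hK : 0 ≤ K) (hw : IntegrableOn w (Icc c d))
    (hM : ∀ t ∈ Icc c d, w t ≤ M) (h : ∀ t ∈ Icc c d, w t ≤ K * ∫ s in c..t, w s) (n : ℕ) :
    ∀ t ∈ Icc c d, w t ≤ M * (K * (t - c)) ^ n / n.factorial := by
  induction n with
  | zero => simpa using hM
  | succ n ih =>
    intro t ht
    have hsub : Icc c t ⊆ Icc c d := Icc_subset_Icc_right ht.2
    have hbound : ∫ s in c..t, w s ≤ ∫ s in c..t, M * (K * (s - c)) ^ n / n.factorial :=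
      intervalIntegral.integral_mono_on ht.1
        ((intervalIntegrable_iff_integrableOn_Icc_of_le ht.1).2 (hw.mono_set hsub))
        ((by fun_prop : Continuous fun s ↦ M * (K * (s - c)) ^ n / n.factorial).intervalIntegrable
          _ _)
        fun s hs ↦ ih s (hsub hs)
    have hpoly : ∫ s in c..t, M * (K * (s - c)) ^ n / n.factorial
        = M * K ^ n / n.factorial * ((t - c) ^ (n + 1) / (n + 1)) := by
      simp_rw [mul_pow, ← integral_sub_pow]
      rw [← intervalIntegral.integral_const_mul]
      congr 1; ext s; ring
    calc w t ≤ K * ∫ s in c..t, w s := h t ht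
      _ ≤ K * (M * K ^ n / n.factorial * ((t - c) ^ (n + 1) / (n + 1))) := by
        rw [← hpoly]; gcongr
      _ = M * (K * (t - c)) ^ (n + 1) / (n + 1).factorial := by
        rw [Nat.factorial_succ, mul_pow]; push_cast; field_simp; ring

lemma nonpos_of_le_mul_integral (hK : 0 ≤ K) (hw : IntegrableOn w (Icc c d))
    (hM : ∀ t ∈ Icc c d, w t ≤ M) (h : ∀ t ∈ Icc c d, w t ≤ K * ∫ s in c..t, w s) :
    ∀ t ∈ Icc c d, w t ≤ 0 := by
  intro t ht
  have hlim : Tendsto (fun n : ℕ ↦ M * ((K * (t - c)) ^ n / n.factorial)) atTop (nhds 0) := by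
    simpa using (FloorSemiring.tendsto_pow_div_factorial_atTop (K * (t - c))).const_mul M
  refine ge_of_tendsto' hlim fun n ↦ ?_
  rw [← mul_div_assoc]
  exact le_mul_pow_div_factorial_of_le_mul_integral hK hw hM h n t ht

end Gronwall

lemma exists_last_le_of_antitoneOn {f g : ℝ → ℝ} {a b : ℝ} (hab : a ≤ b)
    (hf : AntitoneOn f (Icc a b)) (hg : ContinuousOn g (Icc a b)) (ha : f a ≤ g a) :
    ∃ c ∈ Icc a b, f c ≤ g c ∧ ∀ t ∈ Ioc c b, g t < f t := by
  set S := {t ∈ Icc a b | f t ≤ g t}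
  have haS : a ∈ S := ⟨left_mem_Icc.2 hab, ha⟩
  have hbdd : BddAbove S := ⟨b, fun t ht ↦ ht.1.2⟩
  set c := sSup S
  have hc : c ∈ Icc a b := ⟨le_csSup hbdd haS, csSup_le ⟨a, haS⟩ fun t ht ↦ ht.1.2⟩
  have hS : S ⊆ Icc a c ∩ g ⁻¹' Ici (f c) := fun t ht ↦
    ⟨⟨ht.1.1, le_csSup hbdd ht⟩, (hf ht.1 hc (le_csSup hbdd ht)).trans ht.2⟩
  have hclosed : IsClosed (Icc a c ∩ g ⁻¹' Ici (f c)) :=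
    (hg.mono (Icc_subset_Icc_right hc.2)).preimage_isClosed_of_isClosed isClosed_Icc isClosed_Ici
  refine ⟨c, hc, (hclosed.closure_subset_iff.2 hS (csSup_mem_closure ⟨a, haS⟩ hbdd)).2,
    fun t ht ↦ ?_⟩
  by_contra! hle
  exact (le_csSup hbdd ⟨⟨hc.1.trans ht.1.le, ht.2⟩, hle⟩).not_gt ht.1

lemma sub_le_mul_integral_sub_of_antitoneOn {f g f' g' F : ℝ → ℝ} {K : NNReal} {a b : ℝ}
    (hab : a ≤ b) (hf : AntitoneOn f (Icc a b)) (hf' : ∀ᵐ x, x ∈ Ioo a b → HasDerivAt f (f' x) x)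
    (hg : ContinuousOn g (Icc a b)) (hg' : IntervalIntegrable g' volume a b)
    (hftc : g b - g a = ∫ x in a..b, g' x) (hF : LipschitzWith K F)
    (hfineq : ∀ᵐ x, x ∈ Ioo a b → f' x ≤ F (f x)) (hgeq : ∀ᵐ x, x ∈ Ioo a b → g' x = F (g x))
    (ha : f a ≤ g a) (hgf : ∀ x ∈ Ioo a b, g x < f x) :
    f b - g b ≤ K * ∫ x in a..b, (f x - g x) := by
  have hf'i := hf.intervalIntegrable_of_hasDerivAt hab hf'
  have hfgi : IntervalIntegrable (fun x ↦ f x - g x) volume a b := by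
    rw [← uIcc_of_le hab] at hf hg
    exact hf.intervalIntegrable.sub hg.intervalIntegrable
  have hderiv : ∫ x in a..b, (f' x - g' x) ≤ ∫ x in a..b, K * (f x - g x) := by
    refine intervalIntegral.integral_mono_ae_restrict hab (hf'i.sub hg') (hfgi.const_mul _) ?_
    rw [EventuallyLE, ← restrict_Ioo_eq_restrict_Icc, ae_restrict_iff' measurableSet_Ioo]
    filter_upwards [hfineq, hgeq] with x hfx hgx hx
    have hlip := (le_abs_self _).trans (hF.dist_le_mul (f x) (g x))
    rw [Real.dist_eq, abs_of_pos (sub_pos.2 (hgf x hx))] at hlip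
    linarith [hfx hx, hgx hx]
  rw [intervalIntegral.integral_sub hf'i hg', intervalIntegral.integral_const_mul] at hderiv
  linarith [hf.sub_le_integral_of_hasDerivAt hab hf']

theorem stmt_0_general (a b : ℝ) (f g f' g' F : ℝ → ℝ) (K : NNReal)
    (hf : AntitoneOn f (Icc a b))
    (hf' : ∀ᵐ t ∂volume, t ∈ Ioo a b → HasDerivAt f (f' t) t)
    (hg : ∀ t ∈ Icc a b, HasDerivAt g (g' t) t)
    (hg'int : IntegrableOn g' (Icc a b))
    (hftc : ∀ t ∈ Icc a b, g t - g a = ∫ s in a..t, g' s)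
    (hF : LipschitzWith K F)
    (hinit : f a ≤ g a)
    (hfineq : ∀ᵐ t ∂volume, t ∈ Ioo a b → f' t ≤ F (f t))
    (hgeq : ∀ᵐ t ∂volume, t ∈ Ioo a b → g' t = F (g t)) :
    ∀ t ∈ Icc a b, f t ≤ g t := by
  intro t ht
  have hgc : ContinuousOn g (Icc a b) := fun s hs ↦ (hg s hs).continuousAt.continuousWithinAt
  have hg'i (s : ℝ) (hs : s ∈ Icc a b) : IntervalIntegrable g' volume a s :=
    (intervalIntegrable_iff_integrableOn_Icc_of_le hs.1).2
      (hg'int.mono_set (Icc_subset_Icc_right hs.2))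
  obtain ⟨c, hc, hfgc, hgf⟩ := exists_last_le_of_antitoneOn ht.1
    (hf.mono (Icc_subset_Icc_right ht.2)) (hgc.mono (Icc_subset_Icc_right ht.2)) hinit
  have hct : Icc c t ⊆ Icc a b := Icc_subset_Icc hc.1 ht.2
  have hkey (s : ℝ) (hs : s ∈ Icc c t) : f s - g s ≤ K * ∫ x in c..s, (f x - g x) := by
    have hcs : Icc c s ⊆ Icc a b := (Icc_subset_Icc_right hs.2).trans hct
    have hcs' : Ioo c s ⊆ Ioo a b := Ioo_subset_Ioo hc.1 (hcs (right_mem_Icc.2 hs.1)).2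
    have hc_mem : c ∈ Icc a b := hcs (left_mem_Icc.2 hs.1)
    have hs_mem : s ∈ Icc a b := hcs (right_mem_Icc.2 hs.1)
    refine sub_le_mul_integral_sub_of_antitoneOn hs.1 (hf.mono hcs)
      (hf'.mono fun x hx hxs ↦ hx (hcs' hxs)) (hgc.mono hcs)
      ((hg'i c hc_mem).symm.trans (hg'i s hs_mem)) ?_ hF
      (hfineq.mono fun x hx hxs ↦ hx (hcs' hxs)) (hgeq.mono fun x hx hxs ↦ hx (hcs' hxs)) hfgc
      fun x hx ↦ hgf x ⟨hx.1, hx.2.le.trans hs.2⟩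
    rw [← intervalIntegral.integral_interval_sub_left (hg'i s hs_mem) (hg'i c hc_mem),
      ← hftc s hs_mem, ← hftc c hc_mem, sub_sub_sub_cancel_right]
  obtain ⟨x₀, -, hx₀⟩ := isCompact_Icc.exists_isMinOn (nonempty_Icc.2 hc.2) (hgc.mono hct)
  have hbound (s : ℝ) (hs : s ∈ Icc c t) : f s - g s ≤ f c - g x₀ :=
    sub_le_sub (hf (hct (left_mem_Icc.2 hc.2)) (hct hs) hs.1) (hx₀ hs)
  have hint : IntegrableOn (fun x ↦ f x - g x) (Icc c t) :=
    ((hf.mono hct).integrableOn_isCompact isCompact_Icc).sub (hgc.mono hct).integrableOn_Icc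
  exact sub_nonpos.1 (nonpos_of_le_mul_integral K.2 hint hbound hkey t (right_mem_Icc.2 hc.2))

/-- Comparison lemma: a monotone decreasing function satisfying a differential
inequality a.e. stays below the solution of the corresponding ODE. -/
theorem stmt_0 (a b : ℝ) (hab : a ≤ b) (f g f' g' F : ℝ → ℝ) (K : NNReal)
    (hf : AntitoneOn f (Icc a b))
    (hf' : ∀ᵐ t ∂volume, t ∈ Ioo a b → HasDerivAt f (f' t) t)
    (hg : ∀ t ∈ Icc a b, HasDerivAt g (g' t) t)
    (hg'int : IntegrableOn g' (Icc a b))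
    (hftc : ∀ t ∈ Icc a b, g t - g a = ∫ s in a..t, g' s)
    (hF : LipschitzWith K F)
    (hinit : f a ≤ g a)
    (hfineq : ∀ᵐ t ∂volume, t ∈ Ioo a b → f' t ≤ F (f t))
    (hgeq : ∀ᵐ t ∂volume, t ∈ Ioo a b → g' t = F (g t)) :
    ∀ t ∈ Icc a b, f t ≤ g t :=
  stmt_0_general a b f g f' g' F K hf hf' hg hg'int hftc hF hinit hfineq hgeq
end

section
/- Let C ⊆ 𝕊ⁿ (the unit sphere in ℝ^{n+1}) be a closed set that is strongly convex: for every p, q ∈ C there is a unique minimal geodesic in 𝕊ⁿ joining p and q, and this geodesic is contained in C. Then C is contained in an open hemisphere, i.e. there exists a unit vector v ∈ ℝ^{n+1} such that ⟨v, x⟩ > 0 for all x ∈ C. -/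
/-!
A strongly convex `C` contains no antipodal pair: the midpoint `m` of a minimal geodesic from `p`
to `-p` is orthogonal to `p`, and the half great circles through `m` and through `-m` would be two
minimal geodesics. Hence for `p, q ∈ C` the minimal geodesic is the short great-circle arc, and
every positive combination `a • p + b • q` is a positive multiple of a point of that arc, hence of
`C`. So the open cone over `C` is convex and misses `0`, and `0` lies outside the convex hull of
`C`. That hull is compact (Carathéodory), so a hyperplane through `0` separates it strictly from
`0`; its positive side is the required open hemisphere.
-/

open Set
open scoped RealInnerProductSpace

/-- The unit sphere `𝕊ⁿ ⊂ ℝ^{n+1}`. -/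
abbrev Sph (n : ℕ) := Metric.sphere (0 : EuclideanSpace ℝ (Fin (n + 1))) 1

/-- The geodesic (intrinsic) distance on the sphere. -/
noncomputable def gdist {n : ℕ} (x y : Sph n) : ℝ :=
  Real.arccos ⟪(x : EuclideanSpace ℝ (Fin (n + 1))), (y : EuclideanSpace ℝ (Fin (n + 1)))⟫

/-- `γ`, parametrized proportionally to arc length on `[0,1]`, is a minimal
geodesic of the sphere joining `p` and `q`. -/
def IsMinGeodesic {n : ℕ} (p q : Sph n) (γ : ℝ → Sph n) : Prop :=
  γ 0 = p ∧ γ 1 = q ∧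
    ∀ s ∈ Icc (0 : ℝ) 1, ∀ t ∈ Icc (0 : ℝ) 1,
      gdist (γ s) (γ t) = |s - t| * gdist p q

/-- A set `C ⊆ 𝕊ⁿ` is strongly convex: any two of its points are joined by a
minimal geodesic of `𝕊ⁿ`, this geodesic is unique, and it is contained in `C`. -/
def StronglyConvex {n : ℕ} (C : Set (Sph n)) : Prop :=
  ∀ p ∈ C, ∀ q ∈ C,
    (∃ γ : ℝ → Sph n, IsMinGeodesic p q γ) ∧
    (∀ γ γ' : ℝ → Sph n, IsMinGeodesic p q γ → IsMinGeodesic p q γ' →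
      EqOn γ γ' (Icc 0 1)) ∧
    (∀ γ : ℝ → Sph n, IsMinGeodesic p q γ → γ '' Icc 0 1 ⊆ C)

open Real

theorem convexHull_eq_image_sum_stdSimplex {𝕜 E : Type*} [Field 𝕜] [LinearOrder 𝕜]
    [IsStrictOrderedRing 𝕜] [AddCommGroup E] [Module 𝕜 E] [FiniteDimensional 𝕜 E] (s : Set E) :
    convexHull 𝕜 s = (fun wz : (Fin (Module.finrank 𝕜 E + 1) → 𝕜) ×
      (Fin (Module.finrank 𝕜 E + 1) → E) => ∑ i, wz.1 i • wz.2 i) ''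
        (stdSimplex 𝕜 _ ×ˢ univ.pi fun _ => s) := by
  refine Subset.antisymm (fun x hx => ?_) ?_
  · obtain ⟨x₀, hx₀⟩ := convexHull_nonempty_iff.mp ⟨x, hx⟩
    obtain ⟨ι, _, z, w, hzs, hind, hw0, hw1, rfl⟩ := eq_pos_convex_span_of_mem_convexHull hx
    obtain ⟨e⟩ := Function.Embedding.nonempty_of_card_le (β := Fin (Module.finrank 𝕜 E + 1))
      (by simpa using hind.card_le_finrank_succ.trans (Nat.succ_le_succ (Submodule.finrank_le _)))
    classical
    let w' := Function.extend e w 0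
    let z' := Function.extend e z fun _ => x₀
    have hw' : ∀ j, w' (e j) = w j := e.injective.extend_apply _ _
    have hz' : ∀ j, z' (e j) = z j := e.injective.extend_apply _ _
    have hw'_off : ∀ i ∉ range e, w' i = 0 := fun i hi =>
      Function.extend_apply' _ _ _ fun ⟨j, hj⟩ => hi ⟨j, hj⟩
    have hz'_off : ∀ i ∉ range e, z' i = x₀ := fun i hi =>
      Function.extend_apply' _ _ _ fun ⟨j, hj⟩ => hi ⟨j, hj⟩
    refine ⟨(w', z'), ⟨⟨fun i => ?_, ?_⟩, fun i _ => ?_⟩, ?_⟩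
    · by_cases hi : i ∈ range e
      · obtain ⟨j, rfl⟩ := hi
        exact (hw' j ▸ hw0 j).le
      · exact (hw'_off i hi).ge
    · rw [← hw1]
      exact (Fintype.sum_of_injective e e.injective _ _ hw'_off fun j => (hw' j).symm).symm
    · change z' i ∈ s
      by_cases hi : i ∈ range e
      · obtain ⟨j, rfl⟩ := hi
        exact hz' j ▸ hzs ⟨j, rfl⟩
      · exact hz'_off i hi ▸ hx₀
    · refine (Fintype.sum_of_injective e e.injective _ _ (fun i hi => ?_) fun j => ?_).symm
      · simp [hw'_off i hi]
      · simp [hw', hz']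
  · rintro _ ⟨⟨w, z⟩, ⟨⟨hw0, hw1⟩, hz⟩, rfl⟩
    exact (convex_convexHull 𝕜 s).sum_mem (fun i _ => hw0 i) hw1
      fun i _ => subset_convexHull 𝕜 s (hz i (mem_univ i))

theorem IsCompact.convexHull {E : Type*} [NormedAddCommGroup E] [NormedSpace ℝ E]
    [FiniteDimensional ℝ E] {s : Set E} (hs : IsCompact s) : IsCompact (convexHull ℝ s) := by
  rw [convexHull_eq_image_sum_stdSimplex]
  exact ((isCompact_stdSimplex ℝ _).prod (isCompact_univ_pi fun _ => hs)).image (by fun_prop)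

theorem exists_norm_eq_one_forall_inner_pos {E : Type*} [NormedAddCommGroup E]
    [InnerProductSpace ℝ E] [FiniteDimensional ℝ E] [Nontrivial E] {s : Set E}
    (hs : IsCompact s) (h0 : (0 : E) ∉ convexHull ℝ s) :
    ∃ v : E, ‖v‖ = 1 ∧ ∀ x ∈ s, 0 < ⟪v, x⟫ := by
  obtain ⟨f, u, hf0, hfs⟩ := geometric_hahn_banach_point_closed (convex_convexHull ℝ s)
    hs.convexHull.isClosed h0
  set v := (InnerProductSpace.toDual ℝ E).symm f
  have hv : ∀ x ∈ s, 0 < ⟪v, x⟫ := fun x hx => by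
    rw [InnerProductSpace.toDual_symm_apply]
    linarith [map_zero f, hfs x (subset_convexHull ℝ s hx)]
  by_cases hv0 : v = 0
  · obtain ⟨v', hv'⟩ := exists_norm_eq E zero_le_one
    exact ⟨v', hv', fun x hx => by simpa [hv0] using hv x hx⟩
  · refine ⟨‖v‖⁻¹ • v, norm_smul_inv_norm hv0, fun x hx => ?_⟩
    rw [real_inner_smul_left]
    exact mul_pos (inv_pos.mpr (norm_pos_iff.mpr hv0)) (hv x hx)

section GreatCircle

variable {E : Type*} [NormedAddCommGroup E] [InnerProductSpace ℝ E] {p w : E}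

theorem inner_cos_smul_add_sin_smul (hp : ‖p‖ = 1) (hw : ‖w‖ = 1) (hpw : ⟪p, w⟫ = 0)
    (s t : ℝ) : ⟪cos s • p + sin s • w, cos t • p + sin t • w⟫ = cos (s - t) := by
  simp only [inner_add_left, inner_add_right, real_inner_smul_left, real_inner_smul_right,
    real_inner_self_eq_norm_sq, hp, hw, hpw, real_inner_comm p w, cos_sub]
  ring

theorem norm_cos_smul_add_sin_smul (hp : ‖p‖ = 1) (hw : ‖w‖ = 1) (hpw : ⟪p, w⟫ = 0)
    (s : ℝ) : ‖cos s • p + sin s • w‖ = 1 := by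
  have := inner_cos_smul_add_sin_smul hp hw hpw s s
  rw [sub_self, cos_zero, real_inner_self_eq_norm_sq] at this
  exact (pow_eq_one_iff_of_nonneg (norm_nonneg _) two_ne_zero).mp this

theorem sin_smul_add_sin_smul_eq {q : E} {θ : ℝ} (hq : q = cos θ • p + sin θ • w) (t : ℝ) :
    sin ((1 - t) * θ) • p + sin (t * θ) • q = sin θ • (cos (t * θ) • p + sin (t * θ) • w) := by
  rw [hq, show (1 - t) * θ = θ - t * θ by ring, sin_sub]
  module

theorem exists_eq_cos_smul_add_sin_smul {q : E} (hp : ‖p‖ = 1) (hq : ‖q‖ = 1)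
    (hpq₁ : -1 < ⟪p, q⟫) (hpq₂ : ⟪p, q⟫ < 1) :
    ∃ w : E, ‖w‖ = 1 ∧ ⟪p, w⟫ = 0 ∧ ∃ θ ∈ Ioo 0 π, q = cos θ • p + sin θ • w := by
  set θ := arccos ⟪p, q⟫
  have hcos : cos θ = ⟪p, q⟫ := cos_arccos hpq₁.le hpq₂.le
  have hθ : θ ∈ Ioo 0 π := ⟨arccos_pos.mpr hpq₂, arccos_lt_pi.mpr hpq₁⟩
  have hsin : 0 < sin θ := sin_pos_of_pos_of_lt_pi hθ.1 hθ.2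
  have hpr : ⟪p, q - cos θ • p⟫ = 0 := by
    rw [inner_sub_right, real_inner_smul_right, real_inner_self_eq_norm_sq, hp, hcos]
    ring
  have hnorm : ‖q - cos θ • p‖ = sin θ := by
    rw [← sq_eq_sq₀ (norm_nonneg _) hsin.le, ← real_inner_self_eq_norm_sq, inner_sub_left,
      real_inner_smul_left, hpr, inner_sub_right, real_inner_self_eq_norm_sq,
      real_inner_smul_right, real_inner_comm, hq, hcos, sin_sq, hcos]
    ring
  refine ⟨(sin θ)⁻¹ • (q - cos θ • p), ?_, ?_, θ, hθ, ?_⟩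
  · rw [norm_smul, hnorm, norm_inv, norm_of_nonneg hsin.le, inv_mul_cancel₀ hsin.ne']
  · rw [real_inner_smul_right, hpr, mul_zero]
  · rw [smul_inv_smul₀ hsin.ne']
    abel

end GreatCircle

local notation "𝔼" n:max => EuclideanSpace ℝ (Fin (n + 1))

section Sphere

variable {n : ℕ}

theorem exists_isMinGeodesic_eq_cos_smul_add_sin_smul {p q : Sph n} {w : 𝔼 n} (hw : ‖w‖ = 1)
    (hpw : ⟪(p : 𝔼 n), w⟫ = 0) {θ : ℝ} (hθ : θ ∈ Icc 0 π)
    (hq : (q : 𝔼 n) = cos θ • (p : 𝔼 n) + sin θ • w) :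
    ∃ γ : ℝ → Sph n, IsMinGeodesic p q γ ∧
      ∀ t, (γ t : 𝔼 n) = cos (t * θ) • (p : 𝔼 n) + sin (t * θ) • w := by
  have hp := norm_eq_of_mem_sphere p
  let γ : ℝ → Sph n := fun t => ⟨cos (t * θ) • (p : 𝔼 n) + sin (t * θ) • w,
    mem_sphere_zero_iff_norm.mpr (norm_cos_smul_add_sin_smul hp hw hpw _)⟩
  have hpq : gdist p q = θ := by
    rw [gdist, hq, inner_add_right, real_inner_smul_right, real_inner_smul_right,
      real_inner_self_eq_norm_sq, hp, hpw, mul_zero, add_zero, one_pow, mul_one,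
      arccos_cos hθ.1 hθ.2]
  refine ⟨γ, ⟨Subtype.ext (by simp [γ]), Subtype.ext (by simp [γ, hq]), fun s hs t ht => ?_⟩,
    fun t => rfl⟩
  have hst : |s - t| ≤ 1 :=
    abs_sub_le_iff.mpr ⟨by linarith [hs.2, ht.1], by linarith [hs.1, ht.2]⟩
  rw [gdist, inner_cos_smul_add_sin_smul hp hw hpw, ← sub_mul, ← cos_abs, abs_mul,
    abs_of_nonneg hθ.1, hpq, arccos_cos (mul_nonneg (abs_nonneg _) hθ.1)
      (by nlinarith [hθ.1, hθ.2, abs_nonneg (s - t)])]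

theorem StronglyConvex.coe_ne_neg {C : Set (Sph n)} (hC : StronglyConvex C) {p q : Sph n}
    (hp : p ∈ C) (hq : q ∈ C) : (q : 𝔼 n) ≠ -p := by
  intro hqp
  obtain ⟨⟨γ, hγ0, -, hγ⟩, huniq, -⟩ := hC p hp q hq
  set m := γ (1 / 2)
  have hpm : ⟪(p : 𝔼 n), m⟫ = 0 := by
    have hpq : gdist p q = π := by
      rw [gdist, hqp, inner_neg_right, real_inner_self_eq_norm_sq, norm_eq_of_mem_sphere]
      norm_num
    have := hγ 0 (by norm_num) (1 / 2) (by norm_num)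
    rw [hγ0, hpq] at this
    norm_num at this
    exact arccos_eq_pi_div_two.mp (this.trans (one_div_mul_eq_div 2 π))
  have hq' : ∀ w : 𝔼 n, (q : 𝔼 n) = cos π • (p : 𝔼 n) + sin π • w := by simp [hqp]
  obtain ⟨γ₁, hγ₁, hγ₁t⟩ := exists_isMinGeodesic_eq_cos_smul_add_sin_smul
    (norm_eq_of_mem_sphere m) hpm ⟨pi_pos.le, le_rfl⟩ (hq' _)
  obtain ⟨γ₂, hγ₂, hγ₂t⟩ := exists_isMinGeodesic_eq_cos_smul_add_sin_smul (w := -(m : 𝔼 n))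
    (by rw [norm_neg, norm_eq_of_mem_sphere]) (by rw [inner_neg_right, hpm, neg_zero])
    ⟨pi_pos.le, le_rfl⟩ (hq' _)
  have h := congrArg Subtype.val (huniq γ₁ γ₂ hγ₁ hγ₂ ⟨by norm_num, by norm_num⟩ :
    γ₁ (1 / 2) = γ₂ (1 / 2))
  rw [hγ₁t, hγ₂t, one_div_mul_eq_div, cos_pi_div_two, sin_pi_div_two] at h
  simp only [zero_smul, one_smul, zero_add] at h
  rw [eq_neg_iff_add_eq_zero, ← two_smul ℝ, smul_eq_zero, or_iff_right two_ne_zero] at h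
  exact ne_zero_of_mem_unit_sphere m h

theorem exists_sin_mul_eq_sin_mul {a b θ : ℝ} (ha : 0 < a) (hb : 0 < b) (hθ : θ ∈ Ioo 0 π) :
    ∃ t ∈ Ioo (0 : ℝ) 1, sin ((1 - t) * θ) * b = sin (t * θ) * a := by
  have hsin := sin_pos_of_pos_of_lt_pi hθ.1 hθ.2
  obtain ⟨t, ht, h⟩ := intermediate_value_Ioo' zero_le_one
    (f := fun t => sin ((1 - t) * θ) * b - sin (t * θ) * a) (by fun_prop)
    (show (0 : ℝ) ∈ Ioo _ _ by simpa using ⟨mul_pos hsin ha, mul_pos hsin hb⟩)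
  exact ⟨t, ht, sub_eq_zero.mp h⟩

theorem StronglyConvex.exists_smul_add_smul_eq {C : Set (Sph n)} (hC : StronglyConvex C)
    {p q : Sph n} (hp : p ∈ C) (hq : q ∈ C) {a b : ℝ} (ha : 0 < a) (hb : 0 < b) :
    ∃ r : ℝ, 0 < r ∧ ∃ m ∈ C, a • (p : 𝔼 n) + b • (q : 𝔼 n) = r • (m : 𝔼 n) := by
  by_cases hpq : p = q
  · subst hpq
    exact ⟨a + b, by positivity, p, hp, (add_smul a b _).symm⟩
  have hp₁ := norm_eq_of_mem_sphere p
  have hq₁ := norm_eq_of_mem_sphere q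
  have hle : |⟪(p : 𝔼 n), q⟫| ≤ 1 := by
    simpa [hp₁, hq₁] using abs_real_inner_le_norm (p : 𝔼 n) q
  have hlt : ⟪(p : 𝔼 n), q⟫ < 1 := (abs_le.mp hle).2.lt_of_ne fun h =>
    hpq (Subtype.ext ((inner_eq_one_iff_of_norm_eq_one hp₁ hq₁).mp h))
  have hgt : -1 < ⟪(p : 𝔼 n), q⟫ := (abs_le.mp hle).1.lt_of_ne fun h => by
    have : (p : 𝔼 n) = -q := (inner_eq_one_iff_of_norm_eq_one (𝕜 := ℝ) hp₁
      (by rwa [norm_neg])).mp (by rw [inner_neg_right, ← h, neg_neg])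
    exact hC.coe_ne_neg hp hq (by rw [this, neg_neg])
  obtain ⟨w, hw, hpw, θ, hθ, hqθ⟩ := exists_eq_cos_smul_add_sin_smul hp₁ hq₁ hgt hlt
  obtain ⟨γ, hγ, hγt⟩ :=
    exists_isMinGeodesic_eq_cos_smul_add_sin_smul hw hpw (Ioo_subset_Icc_self hθ) hqθ
  obtain ⟨t, ht, hbal⟩ := exists_sin_mul_eq_sin_mul ha hb hθ
  have hsinθ := sin_pos_of_pos_of_lt_pi hθ.1 hθ.2
  have hsint : 0 < sin (t * θ) :=
    sin_pos_of_pos_of_lt_pi (mul_pos ht.1 hθ.1) (by nlinarith [ht.2, hθ.1, hθ.2])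
  refine ⟨b / sin (t * θ) * sin θ, by positivity, γ t,
    (hC p hp q hq).2.2 γ hγ ⟨t, Ioo_subset_Icc_self ht, rfl⟩, ?_⟩
  have hp_coeff : b / sin (t * θ) * sin ((1 - t) * θ) = a := by
    rw [div_mul_eq_mul_div, div_eq_iff hsint.ne']
    linear_combination hbal
  rw [hγt, mul_smul, ← sin_smul_add_sin_smul_eq hqθ, smul_add, smul_smul, smul_smul, hp_coeff,
    div_mul_cancel₀ _ hsint.ne']

def posCone (C : Set (Sph n)) : Set (𝔼 n) :=
  {x | ∃ r : ℝ, 0 < r ∧ ∃ m ∈ C, x = r • (m : 𝔼 n)}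

theorem StronglyConvex.convex_posCone {C : Set (Sph n)} (hC : StronglyConvex C) :
    Convex ℝ (posCone C) :=
  convex_iff_pairwise_pos.mpr fun _ ⟨r, hr, p, hp, hx⟩ _ ⟨s, hs, q, hq, hy⟩ _ a b ha hb _ => by
    obtain ⟨ρ, hρ, m, hm, h⟩ := hC.exists_smul_add_smul_eq hp hq (mul_pos ha hr) (mul_pos hb hs)
    exact ⟨ρ, hρ, m, hm, by rw [hx, hy, smul_smul, smul_smul, h]⟩

theorem zero_notMem_posCone (C : Set (Sph n)) : (0 : 𝔼 n) ∉ posCone C :=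
  fun ⟨_, hr, m, _, h⟩ =>
    ne_zero_of_mem_unit_sphere m ((smul_eq_zero.mp h.symm).resolve_left hr.ne')

theorem StronglyConvex.zero_notMem_convexHull {C : Set (Sph n)} (hC : StronglyConvex C) :
    (0 : 𝔼 n) ∉ convexHull ℝ ((↑) '' C) := fun h =>
  zero_notMem_posCone C <| convexHull_min
    (by rintro _ ⟨m, hm, rfl⟩; exact ⟨1, one_pos, m, hm, (one_smul ℝ _).symm⟩)
    hC.convex_posCone h

end Sphere

/-- A closed strongly convex subset of the sphere is contained in an open
hemisphere. -/
theorem stmt_4 (n : ℕ) (C : Set (Sph n)) (hcl : IsClosed C)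
    (hconv : StronglyConvex C) :
    ∃ v : EuclideanSpace ℝ (Fin (n + 1)), ‖v‖ = 1 ∧
      ∀ x ∈ C, 0 < ⟪v, (x : EuclideanSpace ℝ (Fin (n + 1)))⟫ := by
  obtain ⟨v, hv, hpos⟩ := exists_norm_eq_one_forall_inner_pos
    (hcl.isCompact.image continuous_subtype_val) hconv.zero_notMem_convexHull
  exact ⟨v, hv, fun x hx => hpos x (mem_image_of_mem _ hx)⟩
end
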